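/- arXiv:2505.05978 — 2 statements merged into one kernel-verified Lean document; each statement's English description precedes it below -/
import Mathlib

section
/- Under the assumptions that M, A are symmetric positive definite, D symmetric positive semidefinite, if u in the dG space satisfies A(u, w) = 0 for all w in the dG space (where A is the dG2 bilinear form with zero data), then u = 0 on every interval of the partition. In particular, the dG2 discrete problem A(u_dG, w) = F(w) for all w has at most one solution. -/
open Matrix

/-- A family of slab functions is a piecewise polynomial of degree `r n`
on each slab. -/
def IsPwPoly (d : ℕ) (r : ℕ → ℕ) (u : ℕ → ℝ → Fin d → ℝ) : Prop :=
  ∀ n, ∃ p : Fin d → Polynomial ℝ,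
    (∀ i, (p i).natDegree ≤ r n) ∧ ∀ s i, u n s i = (p i).eval s

/-- The dG2 bilinear form `𝒜(u, w)` on the partition with nodes `t n`,
slab `I_n = (t n, t (n+1)]`, for `N` slabs. -/
noncomputable def dgA (d N : ℕ) (t : ℕ → ℝ) (M D A : Matrix (Fin d) (Fin d) ℝ)
    (u w : ℕ → ℝ → Fin d → ℝ) : ℝ :=
  (∑ n ∈ Finset.range N, ∫ s in (t n)..(t (n + 1)),
      (M.mulVec (deriv (deriv (u n)) s) + D.mulVec (deriv (u n) s)
        + A.mulVec (u n s)) ⬝ᵥ deriv (w n) s)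
    + (∑ n ∈ Finset.Ico 1 N,
        (M.mulVec (deriv (u n) (t n) - deriv (u (n - 1)) (t n)) ⬝ᵥ deriv (w n) (t n)
          + A.mulVec (u n (t n) - u (n - 1) (t n)) ⬝ᵥ w n (t n)))
    + M.mulVec (deriv (u 0) (t 0)) ⬝ᵥ deriv (w 0) (t 0)
    + A.mulVec (u 0 (t 0)) ⬝ᵥ w 0 (t 0)

/-!
Let `v = u₁ - u₂`, slab by slab. Once `v` vanishes on the previous slab, on `I = (a, b]` it
satisfies `∫ R·w' + (M v'·w')(a) + (A v·w)(a) = 0` for every test `w` of degree `≤ r`, where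
`R = M v'' + D v' + A v`. The energy `E = v'·M v' + v·A v` has `E' = 2 R·v' - 2 v'·D v'`, so the
test `w = v` gives `E(a) + E(b) + 2 ∫ v'·D v' = 0`: `v` and `v'` vanish at both ends of `I`.
The trace terms then drop out, and the tests `w = t^(k+1) eᵢ` make every component of `R` orthogonal
to the polynomials of degree `< r`. Such components are multiples `cᵢ L` of one polynomial `L`,
with `cᵢ` the top coefficient `(A v_r)ᵢ`. Integrating `(t - a)` times the energy identity gives
`2 ∫ (t - a) R·v' = -∫ E`, while orthogonality evaluates the left side as
`r (∫ L²) v_r·A v_r ≥ 0`. Hence `∫ E = 0` and `v = 0`.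
-/

open Polynomial Set intervalIntegral

noncomputable def polyIntegral (a b : ℝ) : ℝ[X] →ₗ[ℝ] ℝ where
  toFun p := ∫ s in a..b, p.eval s
  map_add' p q := by
    simp only [eval_add]
    exact integral_add (p.continuous.intervalIntegrable _ _) (q.continuous.intervalIntegrable _ _)
  map_smul' c p := by simp only [eval_smul, smul_eq_mul, integral_const_mul, RingHom.id_apply]

section polyIntegral

variable {a b : ℝ}

theorem polyIntegral_apply (p : ℝ[X]) : polyIntegral a b p = ∫ s in a..b, p.eval s := rfl

theorem polyIntegral_derivative (p : ℝ[X]) :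
    polyIntegral a b (derivative p) = p.eval b - p.eval a :=
  integral_eq_sub_of_hasDerivAt (fun s _ => p.hasDerivAt s)
    (p.derivative.continuous.intervalIntegrable _ _)

theorem polyIntegral_C_mul (c : ℝ) (p : ℝ[X]) :
    polyIntegral a b (C c * p) = c * polyIntegral a b p := by
  rw [← smul_eq_C_mul, map_smul, smul_eq_mul]

theorem polyIntegral_nonneg (hab : a ≤ b) {p : ℝ[X]} (hp : ∀ s ∈ Icc a b, 0 ≤ p.eval s) :
    0 ≤ polyIntegral a b p :=
  integral_nonneg hab hp

theorem eq_zero_of_polyIntegral_eq_zero (hab : a < b) {p : ℝ[X]}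
    (hp : ∀ s ∈ Icc a b, 0 ≤ p.eval s) (h : polyIntegral a b p = 0) : p = 0 := by
  rw [polyIntegral_apply, integral_eq_zero_iff_of_le_of_nonneg_ae hab.le
    (MeasureTheory.ae_restrict_of_forall_mem measurableSet_Ioc
      fun s hs => hp s (Ioc_subset_Icc_self hs))
    (p.continuous.intervalIntegrable _ _)] at h
  have hroots : EqOn (fun s => p.eval s) 0 (Ioc a b) :=
    MeasureTheory.Measure.eqOn_of_ae_eq h p.continuous.continuousOn continuousOn_const
      (by rw [interior_Ioc, closure_Ioo hab.ne]; exact Ioc_subset_Icc_self)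
  exact p.eq_zero_of_infinite_isRoot ((Ioc_infinite hab).mono hroots)

end polyIntegral

section Degree

variable {r : ℕ} {p : ℝ[X]}

theorem degree_lt_of_natDegree_le_of_coeff_eq_zero (hp : p.natDegree ≤ r)
    (hr : p.coeff r = 0) : p.degree < r := by
  rw [degree_lt_iff_coeff_zero]
  intro m hm
  rcases hm.eq_or_lt with rfl | hm
  · exact hr
  · exact coeff_eq_zero_of_natDegree_lt (hp.trans_lt hm)

theorem coeff_derivative_eq_zero_of_natDegree_le (hp : p.natDegree ≤ r) :
    (derivative p).coeff r = 0 := by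
  rw [coeff_derivative, coeff_eq_zero_of_natDegree_lt (by omega), zero_mul]

theorem natDegree_derivative_le_of_le (hp : p.natDegree ≤ r) : (derivative p).natDegree ≤ r :=
  (natDegree_derivative_le p).trans (by omega)

theorem natDegree_X_sub_C_mul_derivative_le (a : ℝ) (hp : p.natDegree ≤ r) :
    ((X - C a) * derivative p).natDegree ≤ r := by
  rcases eq_or_ne p.natDegree 0 with h0 | h0
  · simp [derivative_of_natDegree_zero h0]
  · have := natDegree_derivative_lt h0
    calc _ ≤ (X - C a).natDegree + (derivative p).natDegree := natDegree_mul_le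
      _ ≤ r := by rw [natDegree_X_sub_C]; omega

theorem coeff_X_sub_C_mul_derivative (a : ℝ) (hp : p.natDegree ≤ r) :
    ((X - C a) * derivative p).coeff r = r * p.coeff r := by
  rw [sub_mul, coeff_sub, coeff_C_mul, coeff_derivative_eq_zero_of_natDegree_le hp, mul_zero,
    sub_zero]
  cases r with
  | zero => simp
  | succ r => rw [coeff_X_mul, coeff_derivative]; push_cast; ring

end Degree

def OrthogonalToDegreeLT (a b : ℝ) (r : ℕ) (q : ℝ[X]) : Prop :=
  ∀ p : ℝ[X], p.degree < r → polyIntegral a b (q * p) = 0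

section Orthogonal

variable {a b : ℝ} {r : ℕ}

theorem orthogonalToDegreeLT_of_forall_X_pow {q : ℝ[X]}
    (h : ∀ k < r, polyIntegral a b (q * X ^ k) = 0) : OrthogonalToDegreeLT a b r q := by
  intro p hp
  rw [p.as_sum_support_C_mul_X_pow, Finset.mul_sum, map_sum]
  refine Finset.sum_eq_zero fun k hk => ?_
  have hkr : k < r := by
    by_contra hkr
    exact mem_support_iff.mp hk
      (coeff_eq_zero_of_degree_lt (hp.trans_le (by exact_mod_cast not_lt.mp hkr)))
  rw [mul_left_comm, polyIntegral_C_mul, h k hkr, mul_zero]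

theorem OrthogonalToDegreeLT.eq_zero (hab : a < b) {q : ℝ[X]} (hq : OrthogonalToDegreeLT a b r q)
    (hdeg : q.degree < r) : q = 0 :=
  mul_self_eq_zero.mp <| eq_zero_of_polyIntegral_eq_zero hab
    (fun s _ => by rw [eval_mul]; exact mul_self_nonneg _) (hq q hdeg)

theorem OrthogonalToDegreeLT.C_mul {q : ℝ[X]} (hq : OrthogonalToDegreeLT a b r q) (c : ℝ) :
    OrthogonalToDegreeLT a b r (C c * q) := by
  intro p hp
  rw [mul_assoc, polyIntegral_C_mul, hq p hp, mul_zero]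

theorem OrthogonalToDegreeLT.sub {q L : ℝ[X]} (hq : OrthogonalToDegreeLT a b r q)
    (hL : OrthogonalToDegreeLT a b r L) : OrthogonalToDegreeLT a b r (q - L) := by
  intro p hp
  rw [sub_mul, map_sub, hq p hp, hL p hp, sub_zero]

theorem OrthogonalToDegreeLT.polyIntegral_mul {q g : ℝ[X]} (hq : OrthogonalToDegreeLT a b r q)
    (hg : g.natDegree ≤ r) :
    polyIntegral a b (q * g) = g.coeff r * polyIntegral a b (q * X ^ r) := by
  have hlow : (g - C (g.coeff r) * X ^ r).degree < ↑r :=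
    degree_lt_of_natDegree_le_of_coeff_eq_zero
      ((natDegree_sub_le_of_le hg (natDegree_C_mul_X_pow_le _ _)).trans (max_self r).le)
      (by simp)
  have hsplit : q * g = q * (g - C (g.coeff r) * X ^ r) + C (g.coeff r) * (q * X ^ r) := by ring
  rw [hsplit, map_add, hq _ hlow, polyIntegral_C_mul, zero_add]

theorem OrthogonalToDegreeLT.eq_C_mul (hab : a < b) {q L : ℝ[X]}
    (hq : OrthogonalToDegreeLT a b r q) (hqdeg : q.natDegree ≤ r)
    (hL : OrthogonalToDegreeLT a b r L) (hLdeg : L.natDegree ≤ r) (hLr : L.coeff r = 1) :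
    q = C (q.coeff r) * L :=
  sub_eq_zero.mp <| (hq.sub (hL.C_mul _)).eq_zero hab <|
    degree_lt_of_natDegree_le_of_coeff_eq_zero
      ((natDegree_sub_le_of_le hqdeg ((natDegree_C_mul_le _ _).trans hLdeg)).trans
        (max_self r).le) (by simp [hLr])

-- The polynomials of degree `≤ r` orthogonal to those of degree `< r` form a line, spanned by the
-- Legendre polynomial `L` of degree `r` on `[a, b]`; for monic `L`, `κ = ∫ L²`.
theorem exists_polyIntegral_mul_eq_coeff_mul (hab : a < b) (r : ℕ) :
    ∃ κ : ℝ, 0 ≤ κ ∧ ∀ q g : ℝ[X], OrthogonalToDegreeLT a b r q → q.natDegree ≤ r →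
      g.natDegree ≤ r → polyIntegral a b (q * g) = κ * q.coeff r * g.coeff r := by
  by_cases hL : ∃ L : ℝ[X], OrthogonalToDegreeLT a b r L ∧ L.natDegree ≤ r ∧ L.coeff r = 1
  · obtain ⟨L, hL, hLdeg, hLr⟩ := hL
    refine ⟨polyIntegral a b (L * L), polyIntegral_nonneg hab.le fun s _ => by
      rw [eval_mul]; exact mul_self_nonneg _, fun q g hq hqdeg hg => ?_⟩
    nth_rw 1 [hq.eq_C_mul hab hqdeg hL hLdeg hLr]
    rw [mul_assoc, polyIntegral_C_mul, hL.polyIntegral_mul hg,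
      hL.polyIntegral_mul hLdeg, hLr]
    ring
  · refine ⟨0, le_rfl, fun q g hq hqdeg _ => ?_⟩
    have hqr : q.coeff r = 0 := by
      by_contra hqr
      refine hL ⟨C (q.coeff r)⁻¹ * q, ?_, (natDegree_C_mul_le _ _).trans hqdeg, by simp [hqr]⟩
      exact hq.C_mul _
    rw [hqr, mul_zero, zero_mul,
      hq.eq_zero hab (degree_lt_of_natDegree_le_of_coeff_eq_zero hqdeg hqr), zero_mul, map_zero]

end Orthogonal

section PolyVec

variable {ι : Type*}

noncomputable def vderiv (v : ι → ℝ[X]) : ι → ℝ[X] := fun i => derivative (v i)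

def veval (v : ι → ℝ[X]) (s : ℝ) : ι → ℝ := fun i => (v i).eval s

@[simp] theorem vderiv_apply (v : ι → ℝ[X]) (i : ι) : vderiv v i = derivative (v i) := rfl

@[simp] theorem veval_apply (v : ι → ℝ[X]) (s : ℝ) (i : ι) : veval v s i = (v i).eval s := rfl

@[simp] theorem vderiv_zero : vderiv (0 : ι → ℝ[X]) = 0 := funext fun _ => derivative_zero

theorem vderiv_sub (v w : ι → ℝ[X]) : vderiv (v - w) = vderiv v - vderiv w :=
  funext fun _ => derivative_sub

theorem vderiv_single [DecidableEq ι] (i : ι) (p : ℝ[X]) :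
    vderiv (Pi.single i p) = Pi.single i (derivative p) := by
  ext1 j
  rcases eq_or_ne j i with rfl | hj <;> simp [*]

theorem vderiv_mulVec [Fintype ι] (B : Matrix ι ι ℝ) (x : ι → ℝ[X]) :
    vderiv (B.map C *ᵥ x) = B.map C *ᵥ vderiv x := by
  ext1 i
  simp [mulVec, dotProduct]

theorem derivative_dotProduct [Fintype ι] (x y : ι → ℝ[X]) :
    derivative (x ⬝ᵥ y) = vderiv x ⬝ᵥ y + x ⬝ᵥ vderiv y := by
  simp [dotProduct, Finset.sum_add_distrib]

theorem veval_add (v w : ι → ℝ[X]) (s : ℝ) : veval (v + w) s = veval v s + veval w s :=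
  funext fun _ => eval_add

theorem veval_sub (v w : ι → ℝ[X]) (s : ℝ) : veval (v - w) s = veval v s - veval w s :=
  funext fun _ => eval_sub _ _ _

theorem eval_dotProduct [Fintype ι] (x y : ι → ℝ[X]) (s : ℝ) :
    (x ⬝ᵥ y).eval s = veval x s ⬝ᵥ veval y s :=
  (evalRingHom s).map_dotProduct x y

theorem veval_mulVec [Fintype ι] (B : Matrix ι ι ℝ) (x : ι → ℝ[X]) (s : ℝ) :
    veval (B.map C *ᵥ x) s = B *ᵥ veval x s := by
  ext1 i
  simp [mulVec, dotProduct, eval_finsetSum]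

theorem coeff_mulVec [Fintype ι] (B : Matrix ι ι ℝ) (x : ι → ℝ[X]) (r : ℕ) (i : ι) :
    ((B.map C *ᵥ x) i).coeff r = (B *ᵥ fun j => (x j).coeff r) i := by
  simp [mulVec, dotProduct]

theorem natDegree_mulVec_le [Fintype ι] (B : Matrix ι ι ℝ) {x : ι → ℝ[X]} {r : ℕ}
    (hx : ∀ j, (x j).natDegree ≤ r) (i : ι) : ((B.map C *ᵥ x) i).natDegree ≤ r :=
  natDegree_sum_le_of_forall_le _ _ fun j _ => (natDegree_C_mul_le _ _).trans (hx j)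

theorem hasDerivAt_veval [Fintype ι] (v : ι → ℝ[X]) (s : ℝ) :
    HasDerivAt (veval v) (veval (vderiv v) s) s :=
  hasDerivAt_pi.2 fun i => (v i).hasDerivAt s

theorem deriv_veval [Fintype ι] (v : ι → ℝ[X]) : deriv (veval v) = veval (vderiv v) :=
  funext fun s => (hasDerivAt_veval v s).deriv

end PolyVec

theorem Matrix.PosSemidef.isSymm {ι : Type*} {B : Matrix ι ι ℝ} (hB : B.PosSemidef) : B.IsSymm :=
  isHermitian_iff_isSymm.mp hB.isHermitian

section QuadForm

variable {ι : Type*} [Fintype ι]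

noncomputable def quadForm (B : Matrix ι ι ℝ) (x : ι → ℝ[X]) : ℝ[X] := x ⬝ᵥ B.map C *ᵥ x

theorem eval_quadForm (B : Matrix ι ι ℝ) (x : ι → ℝ[X]) (s : ℝ) :
    (quadForm B x).eval s = veval x s ⬝ᵥ B *ᵥ veval x s := by
  rw [quadForm, eval_dotProduct, veval_mulVec]

theorem quadForm_eval_nonneg {B : Matrix ι ι ℝ} (hB : B.PosSemidef) (x : ι → ℝ[X]) (s : ℝ) :
    0 ≤ (quadForm B x).eval s := by
  simpa [eval_quadForm] using hB.dotProduct_mulVec_nonneg (veval x s)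

theorem veval_eq_zero_of_quadForm_eval_eq_zero {B : Matrix ι ι ℝ} (hB : B.PosDef)
    {x : ι → ℝ[X]} {s : ℝ} (h : (quadForm B x).eval s = 0) : veval x s = 0 := by
  by_contra hx
  have hpos := hB.dotProduct_mulVec_pos hx
  rw [star_trivial, ← eval_quadForm, h] at hpos
  exact hpos.false

theorem Matrix.IsSymm.dotProduct_mulVec_comm {R : Type*} [CommSemiring R] {B : Matrix ι ι R}
    (hB : B.IsSymm) (x y : ι → R) : x ⬝ᵥ B *ᵥ y = (B *ᵥ x) ⬝ᵥ y := by
  rw [dotProduct_mulVec, ← mulVec_transpose, hB.eq]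

theorem derivative_quadForm {B : Matrix ι ι ℝ} (hB : B.IsSymm) (x : ι → ℝ[X]) :
    derivative (quadForm B x) = 2 * ((B.map C *ᵥ x) ⬝ᵥ vderiv x) := by
  rw [quadForm, derivative_dotProduct, vderiv_mulVec, (hB.map C).dotProduct_mulVec_comm x,
    dotProduct_comm (vderiv x)]
  ring

end QuadForm

section Mechanics

variable {ι : Type*} [Fintype ι] (M D A : Matrix ι ι ℝ)

noncomputable def odeResidual (v : ι → ℝ[X]) : ι → ℝ[X] :=
  M.map C *ᵥ vderiv (vderiv v) + D.map C *ᵥ vderiv v + A.map C *ᵥ v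

noncomputable def traceForm (v w : ι → ℝ[X]) : ℝ[X] :=
  (M.map C *ᵥ vderiv v) ⬝ᵥ vderiv w + (A.map C *ᵥ v) ⬝ᵥ w

noncomputable def energy (v : ι → ℝ[X]) : ℝ[X] := quadForm M (vderiv v) + quadForm A v

-- `𝒜(v, w)` for `w` supported on the slab `(a, b]` alone, with zero data from the slab before.
noncomputable def slabForm (a b : ℝ) (v w : ι → ℝ[X]) : ℝ :=
  polyIntegral a b (odeResidual M D A v ⬝ᵥ vderiv w) + (traceForm M A v w).eval a

theorem traceForm_self (v : ι → ℝ[X]) : traceForm M A v v = energy M A v := by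
  rw [traceForm, energy, quadForm, quadForm, dotProduct_comm, dotProduct_comm (A.map C *ᵥ v)]

theorem traceForm_sub_left (v v' w : ι → ℝ[X]) :
    traceForm M A (v - v') w = traceForm M A v w - traceForm M A v' w := by
  simp only [traceForm, vderiv_sub, mulVec_sub, sub_dotProduct]
  ring

theorem odeResidual_sub (v v' : ι → ℝ[X]) :
    odeResidual M D A (v - v') = odeResidual M D A v - odeResidual M D A v' := by
  simp only [odeResidual, vderiv_sub, mulVec_sub]
  abel

theorem slabForm_sub_left (a b : ℝ) (v v' w : ι → ℝ[X]) :
    slabForm M D A a b (v - v') w = slabForm M D A a b v w - slabForm M D A a b v' w := by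
  rw [slabForm, odeResidual_sub, sub_dotProduct, map_sub, traceForm_sub_left, eval_sub, slabForm,
    slabForm]
  ring

variable {M D A}

theorem energy_eval_nonneg (hM : M.PosSemidef) (hA : A.PosSemidef) (v : ι → ℝ[X]) (s : ℝ) :
    0 ≤ (energy M A v).eval s := by
  rw [energy, eval_add]
  exact add_nonneg (quadForm_eval_nonneg hM _ s) (quadForm_eval_nonneg hA _ s)

theorem veval_eq_zero_of_energy_eval_eq_zero (hM : M.PosDef) (hA : A.PosDef) {v : ι → ℝ[X]}
    {s : ℝ} (h : (energy M A v).eval s = 0) : veval v s = 0 ∧ veval (vderiv v) s = 0 := by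
  rw [energy, eval_add] at h
  have hM' := quadForm_eval_nonneg hM.posSemidef (vderiv v) s
  have hA' := quadForm_eval_nonneg hA.posSemidef v s
  exact ⟨veval_eq_zero_of_quadForm_eval_eq_zero hA (by linarith),
    veval_eq_zero_of_quadForm_eval_eq_zero hM (by linarith)⟩

theorem derivative_energy (hM : M.IsSymm) (hA : A.IsSymm) (v : ι → ℝ[X]) :
    derivative (energy M A v)
      = 2 * (odeResidual M D A v ⬝ᵥ vderiv v) - 2 * quadForm D (vderiv v) := by
  rw [energy, derivative_add, derivative_quadForm hM, derivative_quadForm hA, dotProduct_comm,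
    (hM.map C).dotProduct_mulVec_comm, odeResidual, add_dotProduct, add_dotProduct, quadForm,
    dotProduct_comm (vderiv v) (D.map C *ᵥ vderiv v)]
  ring

end Mechanics


section Slab

variable {ι : Type*} [Fintype ι] {M D A : Matrix ι ι ℝ} {a b : ℝ}

theorem natDegree_odeResidual_le {r : ℕ} {v : ι → ℝ[X]} (hv : ∀ i, (v i).natDegree ≤ r) (i : ι) :
    (odeResidual M D A v i).natDegree ≤ r := by
  have hv' : ∀ i, (vderiv v i).natDegree ≤ r := fun i => natDegree_derivative_le_of_le (hv i)
  have hv'' : ∀ i, (vderiv (vderiv v) i).natDegree ≤ r :=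
    fun i => natDegree_derivative_le_of_le (hv' i)
  exact natDegree_add_le_of_degree_le (natDegree_add_le_of_degree_le
    (natDegree_mulVec_le M hv'' i) (natDegree_mulVec_le D hv' i)) (natDegree_mulVec_le A hv i)

theorem coeff_odeResidual {r : ℕ} {v : ι → ℝ[X]} (hv : ∀ i, (v i).natDegree ≤ r) (i : ι) :
    (odeResidual M D A v i).coeff r = (A *ᵥ fun j => (v j).coeff r) i := by
  have hv' : (fun j => (vderiv v j).coeff r) = 0 :=
    funext fun j => coeff_derivative_eq_zero_of_natDegree_le (hv j)
  have hv'' : (fun j => (vderiv (vderiv v) j).coeff r) = 0 :=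
    funext fun j => coeff_derivative_eq_zero_of_natDegree_le (natDegree_derivative_le_of_le (hv j))
  rw [odeResidual, Pi.add_apply, Pi.add_apply, coeff_add, coeff_add, coeff_mulVec, coeff_mulVec,
    coeff_mulVec, hv', hv'', mulVec_zero, mulVec_zero, Pi.zero_apply, zero_add, zero_add]

theorem two_mul_slabForm_self (hM : M.IsSymm) (hA : A.IsSymm) (v : ι → ℝ[X]) :
    2 * slabForm M D A a b v v
      = (energy M A v).eval b + (energy M A v).eval a
        + 2 * polyIntegral a b (quadForm D (vderiv v)) := by
  have h := congrArg (polyIntegral a b) (derivative_energy (D := D) hM hA v)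
  simp only [polyIntegral_derivative, map_sub, two_mul, map_add] at h
  rw [slabForm, traceForm_self]
  linarith

-- The energy identity integrated against the multiplier `t - a` (a Pohozaev-type identity).
theorem two_mul_polyIntegral_X_sub_C_mul_odeResidual (hM : M.IsSymm) (hA : A.IsSymm)
    (v : ι → ℝ[X]) :
    2 * polyIntegral a b ((X - C a) * (odeResidual M D A v ⬝ᵥ vderiv v))
      = (b - a) * (energy M A v).eval b - polyIntegral a b (energy M A v)
        + 2 * polyIntegral a b ((X - C a) * quadForm D (vderiv v)) := by
  have hderiv : derivative ((X - C a) * energy M A v) = energy M A v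
      + 2 * ((X - C a) * (odeResidual M D A v ⬝ᵥ vderiv v))
      - 2 * ((X - C a) * quadForm D (vderiv v)) := by
    rw [derivative_mul, derivative_energy hM hA]
    simp only [derivative_sub, derivative_X, derivative_C, sub_zero, one_mul]
    ring
  have h := congrArg (polyIntegral a b) hderiv
  simp only [polyIntegral_derivative, eval_mul, eval_sub, eval_X, eval_C, sub_self, zero_mul,
    sub_zero, map_sub, map_add, two_mul] at h
  linarith

theorem energy_eval_eq_zero_of_slabForm_self_eq_zero (hab : a < b) (hM : M.PosDef)
    (hA : A.PosDef) (hD : D.PosSemidef) {v : ι → ℝ[X]} (h : slabForm M D A a b v v = 0) :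
    (energy M A v).eval a = 0 ∧ (energy M A v).eval b = 0 ∧ quadForm D (vderiv v) = 0 := by
  have hid := two_mul_slabForm_self (D := D) (a := a) (b := b) hM.posSemidef.isSymm
    hA.posSemidef.isSymm v
  have hEa := energy_eval_nonneg hM.posSemidef hA.posSemidef v a
  have hEb := energy_eval_nonneg hM.posSemidef hA.posSemidef v b
  have hψ := polyIntegral_nonneg hab.le fun s _ => quadForm_eval_nonneg hD (vderiv v) s
  exact ⟨by linarith, by linarith, eq_zero_of_polyIntegral_eq_zero hab
    (fun s _ => quadForm_eval_nonneg hD _ s) (by linarith)⟩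

theorem slabForm_eq_polyIntegral_of_veval_eq_zero {v : ι → ℝ[X]} (h₀ : veval v a = 0)
    (h₁ : veval (vderiv v) a = 0) (w : ι → ℝ[X]) :
    slabForm M D A a b v w = polyIntegral a b (odeResidual M D A v ⬝ᵥ vderiv w) := by
  simp [slabForm, traceForm, eval_dotProduct, veval_mulVec, h₀, h₁]

theorem orthogonalToDegreeLT_of_forall_polyIntegral_dotProduct_vderiv [DecidableEq ι] {r : ℕ}
    {q : ι → ℝ[X]}
    (h : ∀ w : ι → ℝ[X], (∀ i, (w i).natDegree ≤ r) → polyIntegral a b (q ⬝ᵥ vderiv w) = 0)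
    (i : ι) : OrthogonalToDegreeLT a b r (q i) := by
  refine orthogonalToDegreeLT_of_forall_X_pow fun k hk => ?_
  have hw : ∀ j, ((Pi.single i (X ^ (k + 1)) : ι → ℝ[X]) j).natDegree ≤ r := by
    intro j
    rcases eq_or_ne j i with rfl | hj
    · simpa using hk
    · simp [hj]
  have hk := h _ hw
  rw [vderiv_single, dotProduct_single, derivative_X_pow, mul_left_comm, polyIntegral_C_mul]
    at hk
  exact (mul_eq_zero.mp hk).resolve_left (by positivity)

theorem polyIntegral_X_sub_C_mul_odeResidual_dotProduct_nonneg (hab : a < b) (hA : A.PosSemidef)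
    {r : ℕ} {v : ι → ℝ[X]} (hv : ∀ i, (v i).natDegree ≤ r)
    (horth : ∀ i, OrthogonalToDegreeLT a b r (odeResidual M D A v i)) :
    0 ≤ polyIntegral a b ((X - C a) * (odeResidual M D A v ⬝ᵥ vderiv v)) := by
  obtain ⟨κ, hκ, hint⟩ := exists_polyIntegral_mul_eq_coeff_mul hab r
  set c : ι → ℝ := fun j => (v j).coeff r
  have hsum : polyIntegral a b ((X - C a) * (odeResidual M D A v ⬝ᵥ vderiv v))
      = κ * r * (c ⬝ᵥ A *ᵥ c) := by
    rw [dotProduct, Finset.mul_sum, map_sum, dotProduct, Finset.mul_sum]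
    refine Finset.sum_congr rfl fun i _ => ?_
    rw [mul_left_comm, vderiv_apply, hint _ _ (horth i) (natDegree_odeResidual_le hv i)
      (natDegree_X_sub_C_mul_derivative_le a (hv i)), coeff_odeResidual hv,
      coeff_X_sub_C_mul_derivative a (hv i)]
    ring
  rw [hsum]
  have hc := hA.dotProduct_mulVec_nonneg c
  rw [star_trivial] at hc
  positivity

theorem eq_zero_of_forall_slabForm_eq_zero [DecidableEq ι] (hab : a < b) (hM : M.PosDef)
    (hA : A.PosDef) (hD : D.PosSemidef) {r : ℕ} {v : ι → ℝ[X]} (hv : ∀ i, (v i).natDegree ≤ r)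
    (h : ∀ w : ι → ℝ[X], (∀ i, (w i).natDegree ≤ r) → slabForm M D A a b v w = 0) : v = 0 := by
  obtain ⟨hEa, hEb, hψ⟩ := energy_eval_eq_zero_of_slabForm_self_eq_zero hab hM hA hD (h v hv)
  obtain ⟨hva, hv'a⟩ := veval_eq_zero_of_energy_eval_eq_zero hM hA hEa
  have horth := orthogonalToDegreeLT_of_forall_polyIntegral_dotProduct_vderiv fun w hw =>
    (slabForm_eq_polyIntegral_of_veval_eq_zero hva hv'a w).symm.trans (h w hw)
  have hpoh := two_mul_polyIntegral_X_sub_C_mul_odeResidual (a := a) (b := b) (D := D)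
    hM.posSemidef.isSymm hA.posSemidef.isSymm v
  simp only [hEb, hψ, mul_zero, map_zero, add_zero] at hpoh
  have hnn := polyIntegral_X_sub_C_mul_odeResidual_dotProduct_nonneg hab hA.posSemidef hv horth
  have hEnn := energy_eval_nonneg hM.posSemidef hA.posSemidef v
  have hE : energy M A v = 0 := eq_zero_of_polyIntegral_eq_zero hab (fun s _ => hEnn s)
    (le_antisymm (by linarith) (polyIntegral_nonneg hab.le fun s _ => hEnn s))
  funext i
  refine Polynomial.funext fun s => ?_
  have hvs := (veval_eq_zero_of_energy_eval_eq_zero hM hA (s := s) (by rw [hE, eval_zero])).1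
  simpa using congrFun hvs i

end Slab

section DG

variable {d N : ℕ} {t : ℕ → ℝ} {M D A : Matrix (Fin d) (Fin d) ℝ}

theorem IsPwPoly.exists_eq_veval {r : ℕ → ℕ} {u : ℕ → ℝ → Fin d → ℝ} (hu : IsPwPoly d r u) :
    ∃ P : ℕ → Fin d → ℝ[X], (∀ n i, (P n i).natDegree ≤ r n) ∧ u = fun n => veval (P n) := by
  choose P hdeg hP using hu
  exact ⟨P, hdeg, funext fun n => funext fun s => funext fun i => hP n s i⟩

theorem isPwPoly_veval_single {r : ℕ → ℕ} {n : ℕ} {w : Fin d → ℝ[X]}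
    (hw : ∀ i, (w i).natDegree ≤ r n) :
    IsPwPoly d r fun m => veval ((Pi.single n w : ℕ → Fin d → ℝ[X]) m) := by
  intro m
  refine ⟨(Pi.single n w : ℕ → Fin d → ℝ[X]) m, fun i => ?_, fun s i => rfl⟩
  rcases eq_or_ne m n with rfl | hm
  · simpa using hw i
  · simp [hm]

theorem dgA_veval (P Q : ℕ → Fin d → ℝ[X]) :
    dgA d N t M D A (fun n => veval (P n)) (fun n => veval (Q n))
      = ∑ n ∈ Finset.range N,
          polyIntegral (t n) (t (n + 1)) (odeResidual M D A (P n) ⬝ᵥ vderiv (Q n))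
        + ∑ n ∈ Finset.Ico 1 N, (traceForm M A (P n - P (n - 1)) (Q n)).eval (t n)
        + (traceForm M A (P 0) (Q 0)).eval (t 0) := by
  simp only [dgA, deriv_veval, polyIntegral_apply, odeResidual, traceForm, eval_add,
    eval_dotProduct, veval_add, veval_mulVec, vderiv_sub, veval_sub]
  ring

theorem dgA_veval_single {n : ℕ} (hn : n < N) (P : ℕ → Fin d → ℝ[X]) (w : Fin d → ℝ[X]) :
    dgA d N t M D A (fun m => veval (P m)) (fun m => veval ((Pi.single n w : ℕ → Fin d → ℝ[X]) m))
      = slabForm M D A (t n) (t (n + 1)) (P n) w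
        - if n = 0 then 0 else (traceForm M A (P (n - 1)) w).eval (t n) := by
  have htrace : ∀ v, traceForm M A v 0 = 0 := fun v => by simp [traceForm]
  rw [dgA_veval, Finset.sum_eq_single_of_mem n (Finset.mem_range.2 hn) fun m _ hm => by simp [hm]]
  rcases n with _ | n
  · rw [Finset.sum_eq_zero fun m hm => by
      rw [Pi.single_eq_of_ne (by grind), htrace, eval_zero]]
    simp [slabForm]
  · rw [Finset.sum_eq_single_of_mem (n + 1) (by simp [Finset.mem_Ico]; omega)
      fun m _ hm => by rw [Pi.single_eq_of_ne hm, htrace, eval_zero]]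
    rw [Pi.single_eq_same, Pi.single_eq_of_ne (Nat.succ_ne_zero n).symm, htrace, eval_zero,
      add_zero, Nat.add_sub_cancel, traceForm_sub_left, eval_sub, if_neg n.succ_ne_zero, slabForm]
    ring

theorem slabForm_eq_of_dgA_veval_single_eq {n : ℕ} (hn : n < N) {P₁ P₂ : ℕ → Fin d → ℝ[X]}
    (hprev : ∀ m < n, P₁ m = P₂ m) {w : Fin d → ℝ[X]}
    (h : dgA d N t M D A (fun m => veval (P₁ m))
        (fun m => veval ((Pi.single n w : ℕ → Fin d → ℝ[X]) m))
      = dgA d N t M D A (fun m => veval (P₂ m))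
        (fun m => veval ((Pi.single n w : ℕ → Fin d → ℝ[X]) m))) :
    slabForm M D A (t n) (t (n + 1)) (P₁ n) w = slabForm M D A (t n) (t (n + 1)) (P₂ n) w := by
  rw [dgA_veval_single hn, dgA_veval_single hn] at h
  rcases n with _ | n
  · simpa using h
  · rw [Nat.add_sub_cancel, hprev n n.lt_succ_self] at h
    simpa using h

end DG

theorem stmt4_general (d N : ℕ) (t : ℕ → ℝ)
    (hmono : ∀ n < N, t n < t (n + 1))
    (M D A : Matrix (Fin d) (Fin d) ℝ)
    (hM : M.PosDef) (hA : A.PosDef) (hD : D.PosSemidef)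
    (r : ℕ → ℕ) (u₁ u₂ : ℕ → ℝ → Fin d → ℝ)
    (hu₁ : IsPwPoly d r u₁) (hu₂ : IsPwPoly d r u₂)
    (hsol : ∀ w : ℕ → ℝ → Fin d → ℝ, IsPwPoly d r w →
      dgA d N t M D A u₁ w = dgA d N t M D A u₂ w) :
    ∀ n < N, ∀ s ∈ Set.Icc (t n) (t (n + 1)), u₁ n s = u₂ n s := by
  obtain ⟨P₁, hP₁, rfl⟩ := hu₁.exists_eq_veval
  obtain ⟨P₂, hP₂, rfl⟩ := hu₂.exists_eq_veval
  have hslab : ∀ n < N, P₁ n = P₂ n := by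
    intro n
    induction n using Nat.strong_induction_on with
    | _ n ih =>
      intro hn
      refine sub_eq_zero.mp <| eq_zero_of_forall_slabForm_eq_zero (hmono n hn) hM hA hD
        (fun i => (natDegree_sub_le_of_le (hP₁ n i) (hP₂ n i)).trans (max_self _).le)
        fun w hw => ?_
      rw [slabForm_sub_left, sub_eq_zero]
      exact slabForm_eq_of_dgA_veval_single_eq hn (fun m hm => ih m hm (hm.trans hn))
        (hsol _ (isPwPoly_veval_single hw))
  intro n hn s _
  dsimp only
  rw [hslab n hn]

/-- Uniqueness of the dG2 discrete solution: if two piecewise polynomials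
produce the same value of the dG2 bilinear form against every test
function of the dG space (i.e. both solve `𝒜(u, w) = F(w)` for all `w`),
then they coincide on every interval of the partition.  In particular,
if `𝒜(u, w) = 0` for all `w` (zero data), then `u = 0` on every interval. -/
theorem stmt4 (d N : ℕ) (hN : 1 ≤ N) (t : ℕ → ℝ)
    (hmono : ∀ n < N, t n < t (n + 1))
    (M D A : Matrix (Fin d) (Fin d) ℝ)
    (hM : M.PosDef) (hA : A.PosDef) (hD : D.PosSemidef)
    (r : ℕ → ℕ) (u₁ u₂ : ℕ → ℝ → Fin d → ℝ)
    (hu₁ : IsPwPoly d r u₁) (hu₂ : IsPwPoly d r u₂)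
    (hsol : ∀ w : ℕ → ℝ → Fin d → ℝ, IsPwPoly d r w →
      dgA d N t M D A u₁ w = dgA d N t M D A u₂ w) :
    ∀ n < N, ∀ s ∈ Set.Icc (t n) (t (n + 1)), u₁ n s = u₂ n s :=
  stmt4_general d N t hmono M D A hM hA hD r u₁ u₂ hu₁ hu₂ hsol
end

section
/- Let M, D, A be symmetric real N×N matrices with M, D positive definite and A positive semidefinite. For pairs (u,v) of piecewise polynomials in V_dG × V_dG, define B((u,v),(w,z)) as the dG1 bilinear form. Then B((u,v),(A u, v)) = Σ_n ∫_{I_n}|D^{1/2}v|² dt + ½|M^{1/2}v(0^+)|² + ½Σ_{n=1}^{N-1}|M^{1/2}[v]_n|² + ½|M^{1/2}v(T^-)|² + ½|A^{1/2}u(0^+)|² + ½Σ_{n=1}^{N-1}|A^{1/2}[u]_n|² + ½|A^{1/2}u(T^-)|², and this quantity is nonnegative. -/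
/-!
Testing with `(A u, v)` makes the coupling terms `-v ⬝ᵥ A u` and `A u ⬝ᵥ v` cancel, leaving
`∫ v ⬝ᵥ D v` plus, for `(S, x) = (A, u)` and `(M, v)`, the upwind energy
`∑ ∫ x' ⬝ᵥ S x + ∑ [x]_n ⬝ᵥ S x(t_n⁺) + x(0⁺) ⬝ᵥ S x(0⁺)`. For symmetric `S` each slab integral is
half the difference of `x ⬝ᵥ S x` between its endpoints, and at each node the identity
`2 (a - b) ⬝ᵥ S a = (a - b) ⬝ᵥ S (a - b) + a ⬝ᵥ S a - b ⬝ᵥ S b` splits the jump term into half a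
squared jump and a telescoping difference. Nonnegativity is then termwise semidefiniteness.
-/

open Matrix

/-- The dG1 bilinear form `ℬ((u,v),(w,z))` on a partition with nodes `t n`
and `N` slabs `I_n = (t n, t (n+1)]`. -/
noncomputable def dgB (d N : ℕ) (t : ℕ → ℝ) (M D A : Matrix (Fin d) (Fin d) ℝ)
    (u v w z : ℕ → ℝ → Fin d → ℝ) : ℝ :=
  (∑ n ∈ Finset.range N, ∫ s in (t n)..(t (n + 1)),
      (deriv (u n) s - v n s) ⬝ᵥ w n s)
    + (∑ n ∈ Finset.Ico 1 N, (u n (t n) - u (n - 1) (t n)) ⬝ᵥ w n (t n))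
    + u 0 (t 0) ⬝ᵥ w 0 (t 0)
    + (∑ n ∈ Finset.range N, ∫ s in (t n)..(t (n + 1)),
        (M.mulVec (deriv (v n) s) + D.mulVec (v n s) + A.mulVec (u n s)) ⬝ᵥ z n s)
    + (∑ n ∈ Finset.Ico 1 N, M.mulVec (v n (t n) - v (n - 1) (t n)) ⬝ᵥ z n (t n))
    + M.mulVec (v 0 (t 0)) ⬝ᵥ z 0 (t 0)

/-- The dG1 energy seminorm squared `|(u,v)|_ℬ²`; note
`|M^{1/2} y|² = y ⬝ᵥ M y`, `|A^{1/2} y|² = y ⬝ᵥ A y` and the integrand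
`|D^{1/2} v|² = v ⬝ᵥ D v`. -/
noncomputable def rhoSq (d N : ℕ) (t : ℕ → ℝ) (M D A : Matrix (Fin d) (Fin d) ℝ)
    (u v : ℕ → ℝ → Fin d → ℝ) : ℝ :=
  (∑ n ∈ Finset.range N, ∫ s in (t n)..(t (n + 1)), v n s ⬝ᵥ D.mulVec (v n s))
    + (1 / 2) * (v 0 (t 0) ⬝ᵥ M.mulVec (v 0 (t 0)))
    + (1 / 2) * ∑ n ∈ Finset.Ico 1 N,
        (v n (t n) - v (n - 1) (t n)) ⬝ᵥ M.mulVec (v n (t n) - v (n - 1) (t n))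
    + (1 / 2) * (v (N - 1) (t N) ⬝ᵥ M.mulVec (v (N - 1) (t N)))
    + (1 / 2) * (u 0 (t 0) ⬝ᵥ A.mulVec (u 0 (t 0)))
    + (1 / 2) * ∑ n ∈ Finset.Ico 1 N,
        (u n (t n) - u (n - 1) (t n)) ⬝ᵥ A.mulVec (u n (t n) - u (n - 1) (t n))
    + (1 / 2) * (u (N - 1) (t N) ⬝ᵥ A.mulVec (u (N - 1) (t N)))

variable {ι : Type*} [Fintype ι]

namespace Matrix

lemma IsSymm.dotProduct_mulVec_comm_s5 {R : Type*} [CommSemiring R] {S : Matrix ι ι R}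
    (hS : S.IsSymm) (x y : ι → R) : x ⬝ᵥ S *ᵥ y = y ⬝ᵥ S *ᵥ x := by
  rw [dotProduct_mulVec, ← hS.eq, vecMul_transpose, hS.eq, dotProduct_comm]

lemma IsSymm.two_mul_sub_dotProduct_mulVec_self {R : Type*} [CommRing R] {S : Matrix ι ι R}
    (hS : S.IsSymm) (a b : ι → R) :
    2 * ((a - b) ⬝ᵥ S *ᵥ a) = (a - b) ⬝ᵥ S *ᵥ (a - b) + a ⬝ᵥ S *ᵥ a - b ⬝ᵥ S *ᵥ b := by
  rw [mulVec_sub, sub_dotProduct, dotProduct_sub, sub_dotProduct, sub_dotProduct,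
    hS.dotProduct_mulVec_comm_s5 b a]
  ring

end Matrix

section Deriv

variable {𝕜 : Type*} [NontriviallyNormedField 𝕜] {x y : 𝕜 → ι → 𝕜} {x' y' : ι → 𝕜} {s : 𝕜}

theorem HasDerivAt.dotProduct (hx : HasDerivAt x x' s) (hy : HasDerivAt y y' s) :
    HasDerivAt (fun s => x s ⬝ᵥ y s) (x' ⬝ᵥ y s + x s ⬝ᵥ y') s := by
  simp only [_root_.dotProduct, ← Finset.sum_add_distrib]
  exact HasDerivAt.fun_sum fun i _ => (hasDerivAt_pi.1 hx i).mul (hasDerivAt_pi.1 hy i)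

theorem HasDerivAt.matrix_mulVec (S : Matrix ι ι 𝕜) (hx : HasDerivAt x x' s) :
    HasDerivAt (fun s => S *ᵥ x s) (S *ᵥ x') s :=
  hasDerivAt_pi.2 fun i =>
    (hasDerivAt_const s (S i)).dotProduct hx |>.congr_deriv (by simp [mulVec])

end Deriv

theorem Matrix.IsSymm.integral_deriv_dotProduct_mulVec_self {S : Matrix ι ι ℝ} (hS : S.IsSymm)
    {x : ℝ → ι → ℝ} (hx : ContDiff ℝ 1 x) (a b : ℝ) :
    ∫ s in a..b, deriv x s ⬝ᵥ S *ᵥ x s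
      = (x b ⬝ᵥ S *ᵥ x b - x a ⬝ᵥ S *ᵥ x a) / 2 := by
  have hderiv : ∀ s, HasDerivAt (fun s => x s ⬝ᵥ S *ᵥ x s) (2 * (deriv x s ⬝ᵥ S *ᵥ x s)) s := by
    intro s
    have hxs := (hx.differentiable one_ne_zero s).hasDerivAt
    refine (hxs.dotProduct (hxs.matrix_mulVec S)).congr_deriv ?_
    rw [hS.dotProduct_mulVec_comm_s5 (x s)]
    ring
  have hcont : Continuous fun s => 2 * (deriv x s ⬝ᵥ S *ᵥ x s) :=
    continuous_const.mul ((hx.continuous_deriv le_rfl).dotProduct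
      (continuous_const.matrix_mulVec hx.continuous))
  rw [eq_div_iff two_ne_zero, mul_comm, ← intervalIntegral.integral_const_mul,
    intervalIntegral.integral_eq_sub_of_hasDerivAt (fun s _ => hderiv s)
      (hcont.intervalIntegrable a b)]

theorem contDiff_of_eq_polynomial_eval {x : ℝ → ι → ℝ} {p : ι → Polynomial ℝ}
    (hx : ∀ s i, x s i = (p i).eval s) (k : WithTop ℕ∞) : ContDiff ℝ k x := by
  have : x = fun s i => (p i).aeval s := by
    funext s i; rw [hx, Polynomial.coe_aeval_eq_eval]
  exact this ▸ contDiff_pi.2 fun i => (p i).contDiff_aeval k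

namespace Matrix.IsSymm

variable {S : Matrix ι ι ℝ}

theorem sum_upwind (hS : S.IsSymm) (x : ℕ → ℝ → ι → ℝ) (t : ℕ → ℝ) {N : ℕ} (hN : 1 ≤ N) :
    (∑ n ∈ Finset.range N,
        (x n (t (n + 1)) ⬝ᵥ S *ᵥ x n (t (n + 1)) - x n (t n) ⬝ᵥ S *ᵥ x n (t n)) / 2)
      + (∑ n ∈ Finset.Ico 1 N, (x n (t n) - x (n - 1) (t n)) ⬝ᵥ S *ᵥ x n (t n))
      + x 0 (t 0) ⬝ᵥ S *ᵥ x 0 (t 0)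
    = (1 / 2) * (x 0 (t 0) ⬝ᵥ S *ᵥ x 0 (t 0))
      + (1 / 2) * ∑ n ∈ Finset.Ico 1 N,
          (x n (t n) - x (n - 1) (t n)) ⬝ᵥ S *ᵥ (x n (t n) - x (n - 1) (t n))
      + (1 / 2) * (x (N - 1) (t N) ⬝ᵥ S *ᵥ x (N - 1) (t N)) := by
  induction N, hN using Nat.le_induction with
  | base => simp only [Finset.sum_range_one, Finset.Ico_self, Finset.sum_empty]; ring
  | succ N hN ih =>
    rw [Finset.sum_range_succ, Finset.sum_Ico_succ_top hN, Finset.sum_Ico_succ_top hN,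
      Nat.add_sub_cancel]
    linarith [hS.two_mul_sub_dotProduct_mulVec_self (x N (t N)) (x (N - 1) (t N))]

theorem sum_integral_upwind (hS : S.IsSymm) {x : ℕ → ℝ → ι → ℝ}
    (hx : ∀ n, ContDiff ℝ 1 (x n)) (t : ℕ → ℝ) {N : ℕ} (hN : 1 ≤ N) :
    (∑ n ∈ Finset.range N, ∫ s in t n..t (n + 1), deriv (x n) s ⬝ᵥ S *ᵥ x n s)
      + (∑ n ∈ Finset.Ico 1 N, (x n (t n) - x (n - 1) (t n)) ⬝ᵥ S *ᵥ x n (t n))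
      + x 0 (t 0) ⬝ᵥ S *ᵥ x 0 (t 0)
    = (1 / 2) * (x 0 (t 0) ⬝ᵥ S *ᵥ x 0 (t 0))
      + (1 / 2) * ∑ n ∈ Finset.Ico 1 N,
          (x n (t n) - x (n - 1) (t n)) ⬝ᵥ S *ᵥ (x n (t n) - x (n - 1) (t n))
      + (1 / 2) * (x (N - 1) (t N) ⬝ᵥ S *ᵥ x (N - 1) (t N)) := by
  simp only [hS.integral_deriv_dotProduct_mulVec_self (hx _)]
  exact hS.sum_upwind x t hN

end Matrix.IsSymm

theorem integral_dG_slab {M : Matrix ι ι ℝ} (hM : M.IsSymm) (D A : Matrix ι ι ℝ)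
    {u v : ℝ → ι → ℝ} (hu : ContDiff ℝ 1 u) (hv : ContDiff ℝ 1 v) (a b : ℝ) :
    (∫ s in a..b, (deriv u s - v s) ⬝ᵥ A *ᵥ u s)
        + ∫ s in a..b, (M *ᵥ deriv v s + D *ᵥ v s + A *ᵥ u s) ⬝ᵥ v s
      = (∫ s in a..b, v s ⬝ᵥ D *ᵥ v s) + (∫ s in a..b, deriv u s ⬝ᵥ A *ᵥ u s)
        + ∫ s in a..b, deriv v s ⬝ᵥ M *ᵥ v s := by
  have hu' := hu.continuous_deriv le_rfl
  have hv' := hv.continuous_deriv le_rfl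
  have hu := hu.continuous
  have hv := hv.continuous
  rw [← intervalIntegral.integral_add, ← intervalIntegral.integral_add,
    ← intervalIntegral.integral_add]
  · refine intervalIntegral.integral_congr fun s _ => ?_
    rw [sub_dotProduct, add_dotProduct, add_dotProduct, dotProduct_comm (M *ᵥ _),
      hM.dotProduct_mulVec_comm_s5 (v s), dotProduct_comm (D *ᵥ _), dotProduct_comm (A *ᵥ _)]
    ring
  all_goals apply Continuous.intervalIntegrable; fun_prop

theorem rhoSq_nonneg {d N : ℕ} {t : ℕ → ℝ} (hmono : ∀ n < N, t n < t (n + 1))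
    {M D A : Matrix (Fin d) (Fin d) ℝ} (hM : M.PosSemidef) (hD : D.PosSemidef)
    (hA : A.PosSemidef) (u v : ℕ → ℝ → Fin d → ℝ) : 0 ≤ rhoSq d N t M D A u v := by
  have hq {S : Matrix (Fin d) (Fin d) ℝ} (hS : S.PosSemidef) (y : Fin d → ℝ) :
      0 ≤ y ⬝ᵥ S *ᵥ y := by
    simpa using hS.dotProduct_mulVec_nonneg y
  have hDint : 0 ≤ ∑ n ∈ Finset.range N, ∫ s in t n..t (n + 1), v n s ⬝ᵥ D *ᵥ v n s :=
    Finset.sum_nonneg fun n hn => intervalIntegral.integral_nonneg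
      (hmono n (Finset.mem_range.1 hn)).le fun s _ => hq hD _
  have hMjump := Finset.sum_nonneg fun n (_ : n ∈ Finset.Ico 1 N) =>
    hq hM (v n (t n) - v (n - 1) (t n))
  have hAjump := Finset.sum_nonneg fun n (_ : n ∈ Finset.Ico 1 N) =>
    hq hA (u n (t n) - u (n - 1) (t n))
  unfold rhoSq
  linarith [hq hM (v 0 (t 0)), hq hM (v (N - 1) (t N)), hq hA (u 0 (t 0)),
    hq hA (u (N - 1) (t N))]

/-- The dG1 bilinear form evaluated at the pair `(A u, v)` equals the
energy seminorm squared, and the latter is nonnegative. -/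
theorem stmt5 (d N : ℕ) (hN : 1 ≤ N) (t : ℕ → ℝ)
    (hmono : ∀ n < N, t n < t (n + 1))
    (M D A : Matrix (Fin d) (Fin d) ℝ)
    (hM : M.PosDef) (hD : D.PosDef) (hA : A.PosSemidef)
    (r : ℕ → ℕ) (u v : ℕ → ℝ → Fin d → ℝ)
    (hu : ∀ n, ∃ p : Fin d → Polynomial ℝ,
      (∀ i, (p i).natDegree ≤ r n) ∧ ∀ s i, u n s i = (p i).eval s)
    (hv : ∀ n, ∃ p : Fin d → Polynomial ℝ,
      (∀ i, (p i).natDegree ≤ r n) ∧ ∀ s i, v n s i = (p i).eval s) :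
    dgB d N t M D A u v (fun n s => A.mulVec (u n s)) v
        = rhoSq d N t M D A u v
      ∧ 0 ≤ rhoSq d N t M D A u v := by
  refine ⟨?_, rhoSq_nonneg hmono hM.posSemidef hD.posSemidef hA u v⟩
  have hu1 n : ContDiff ℝ 1 (u n) := contDiff_of_eq_polynomial_eval (hu n).choose_spec.2 1
  have hv1 n : ContDiff ℝ 1 (v n) := contDiff_of_eq_polynomial_eval (hv n).choose_spec.2 1
  have hMs : M.IsSymm := isHermitian_iff_isSymm.1 hM.1
  have hAs : A.IsSymm := isHermitian_iff_isSymm.1 hA.1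
  have hslabs := Finset.sum_congr rfl fun n (_ : n ∈ Finset.range N) =>
    integral_dG_slab hMs D A (hu1 n) (hv1 n) (t n) (t (n + 1))
  have hMjump := Finset.sum_congr rfl fun n (_ : n ∈ Finset.Ico 1 N) =>
    (dotProduct_comm _ _).trans
      (hMs.dotProduct_mulVec_comm_s5 (v n (t n)) (v n (t n) - v (n - 1) (t n)))
  simp only [Finset.sum_add_distrib] at hslabs
  unfold dgB rhoSq
  rw [hMjump, dotProduct_comm (M *ᵥ _)]
  linarith [hAs.sum_integral_upwind hu1 t hN, hMs.sum_integral_upwind hv1 t hN]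
end
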